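/- arXiv:2502.10333 — 5 statements merged into one kernel-verified Lean document; each statement's English description precedes it below -/
import Mathlib

section
/- Let G be a simple graph on a vertex type V, let v be a vertex, and let a and b be vertices with a ≠ v and b ≠ v. Suppose there exists a walk from a to b in G that avoids v (i.e., none of its vertices equals v). Then for every path p from a to b in G and every vertex x on p with x ≠ v, there exists a walk from a to x in G that avoids v. In other words, every path between two vertices lying in the same connected component of G − v stays inside that component together with possibly the vertex v itself. -/
namespace SimpleGraph.Walk

variable {V : Type*} {G : SimpleGraph V}

lemma IsPath.eq_of_mem_support_left_of_mem_support_right {u x w y : V}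
    {p : G.Walk u x} {q : G.Walk x w} (h : (p.append q).IsPath)
    (hp : y ∈ p.support) (hq : y ∈ q.support) : y = x := by
  have hnodup := h.support_nodup
  rw [support_append, List.nodup_append] at hnodup
  rw [← cons_tail_support, List.mem_cons] at hq
  exact hq.resolve_right fun htail => hnodup.2.2 y hp y htail rfl

end SimpleGraph.Walk

theorem path_stays_in_component_of_minus_v_general {V : Type*} (G : SimpleGraph V)
    (v a b : V)
    (hwalk : ∃ w : G.Walk a b, v ∉ w.support)
    (p : G.Walk a b) (hp : p.IsPath)
    (x : V) (hx : x ∈ p.support) (hxv : x ≠ v) :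
    ∃ w : G.Walk a x, v ∉ w.support := by
  classical
  obtain ⟨w, hw⟩ := hwalk
  -- If `v` lies on `p` before `x`, it cannot lie after `x`: go from `a` to `b` along `w`,
  -- then back along `p` from `b` to `x`.
  by_cases hv : v ∈ (p.takeUntil x hx).support
  · rw [← p.take_spec hx] at hp
    have hv' : v ∉ (p.dropUntil x hx).support := fun h =>
      hxv (hp.eq_of_mem_support_left_of_mem_support_right hv h).symm
    refine ⟨w.append (p.dropUntil x hx).reverse, ?_⟩
    simp only [SimpleGraph.Walk.mem_support_append_iff, SimpleGraph.Walk.support_reverse,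
      List.mem_reverse]
    exact fun h => h.elim hw hv'
  · exact ⟨p.takeUntil x hx, hv⟩

/-- Let `a ≠ v`, `b ≠ v` and suppose some walk from `a` to `b`
avoids the vertex `v`.  Then for every path `p` from `a` to `b` and every
vertex `x` on `p` with `x ≠ v`, there is a walk from `a` to `x` avoiding `v`;
i.e. any path between two vertices of the same component of `G − v` stays in
that component (together with possibly `v` itself). -/
theorem path_stays_in_component_of_minus_v {V : Type*} (G : SimpleGraph V)
    (v a b : V) (ha : a ≠ v) (hb : b ≠ v)
    (hwalk : ∃ w : G.Walk a b, v ∉ w.support)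
    (p : G.Walk a b) (hp : p.IsPath)
    (x : V) (hx : x ∈ p.support) (hxv : x ≠ v) :
    ∃ w : G.Walk a x, v ∉ w.support :=
  path_stays_in_component_of_minus_v_general G v a b hwalk p hp x hx hxv
end

section
/- Let G be a simple graph on a vertex type V, let s and t be distinct vertices, and let p be a path from s to t in G. Consider the darts (oriented edges) of p, each dart having a tail and a head. Then: (i) the tails of the darts of p are pairwise distinct, so every vertex is the tail of at most one dart of p; (ii) the vertex t is not the tail of any dart of p; and (iii) for every vertex n, the number of darts of p with head n, plus β(n), equals the number of darts of p with tail n, where β(s) = 1, β(t) = −1, and β(n) = 0 for n ∉ {s, t}. Consequently the oriented edge set of any simple s–t path is feasible for the relaxed longest-path problem (the longest-path formulation without subtour elimination constraints), so the optimal value of that relaxation is an upper bound on the weight of every simple s–t path. -/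
theorem filt_count {V : Type*} [DecidableEq V] {α : Type*} (l : List α) (f : α → V) (n : V) :
    (l.filter fun x => f x = n).length = (l.map f).count n := by
  rw [List.count_eq_countP, List.countP_eq_length_filter, List.filter_map, List.length_map]
  congr 1

/-- For a path `p` from `s` to `t` (with `s ≠ t`):
(i) the tails of the darts of `p` are pairwise distinct;
(ii) `t` is not the tail of any dart of `p`;
(iii) for every vertex `n`, the number of darts of `p` with head `n`, plus
`β n` (where `β s = 1`, `β t = -1`, `β n = 0` otherwise), equals the number of
darts of `p` with tail `n`.
Hence the oriented edge set of a simple `s`–`t` path is feasible for the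
relaxed longest-path problem. -/
theorem path_darts_feasible_for_relaxed_longest_path {V : Type*} [DecidableEq V]
    (G : SimpleGraph V) (s t : V) (hst : s ≠ t)
    (p : G.Walk s t) (hp : p.IsPath) :
    (p.darts.map fun d => d.toProd.1).Nodup ∧
    (∀ d ∈ p.darts, d.toProd.1 ≠ t) ∧
    (∀ n : V,
      ((p.darts.filter fun d => d.toProd.2 = n).length : ℤ) +
        (if n = s then 1 else if n = t then -1 else 0) =
      ((p.darts.filter fun d => d.toProd.1 = n).length : ℤ)) := by
  have hfst : p.darts.map (fun d => d.toProd.1) = p.support.dropLast := p.map_fst_darts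
  have hsnd : p.darts.map (fun d => d.toProd.2) = p.support.tail := p.map_snd_darts
  have hnd : p.support.Nodup := hp.support_nodup
  have happ : p.support.dropLast ++ [t] = p.support := by
    rw [← hfst]; exact p.map_fst_darts_append
  have ht : t ∉ p.support.dropLast := by
    rw [← happ] at hnd
    exact fun h => (List.disjoint_of_nodup_append hnd) h (by simp)
  refine ⟨?_, ?_, ?_⟩
  · rw [hfst]; exact hnd.sublist (List.dropLast_sublist _)
  · intro d hd hdt
    apply ht
    rw [← hfst]
    exact List.mem_map.2 ⟨d, hd, hdt⟩
  · intro n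
    rw [filt_count, filt_count, hfst, hsnd]
    have h1 : p.support.count n = p.support.tail.count n + (if n = s then 1 else 0) := by
      conv_lhs => rw [p.support_eq_cons]
      rw [List.count_cons]
      by_cases h : n = s
      · simp [h]
      · simp [h, Ne.symm h]
    have h2 : p.support.count n = p.support.dropLast.count n + (if n = t then 1 else 0) := by
      conv_lhs => rw [← happ]
      rw [List.count_append]
      by_cases h : n = t
      · simp [h]
      · simp [h, Ne.symm h]
    have key := h1.symm.trans h2
    split_ifs at key ⊢ with h h' <;>
      first
        | omega
        | exact absurd (h ▸ h') hst
end

section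
/- Let G be a simple graph on a vertex type V, let H be a subgraph of G (H ≤ G, representing the active, i.e. connected, transmission lines), let θ : V → ℝ, and let w : Sym2 V → ℝ be such that |θ(u) − θ(v)| ≤ w({u,v}) for every pair of vertices u, v adjacent in H. If a and b are connected by a walk in H, then there exists a simple path q from a to b in G with |θ(a) − θ(b)| ≤ the weight of q under w. In particular, |θ(a) − θ(b)| is at most the maximum weight of a simple a–b path in G, so big-M values computed from the longest simple path are valid bounds on voltage angle differences of disconnected lines in the all-lines-switchable transmission switching problem. -/
lemma walk_weight_bound {V : Type*} {H : SimpleGraph V} (θ : V → ℝ) (w : Sym2 V → ℝ)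
    (hbound : ∀ u v : V, H.Adj u v → |θ u - θ v| ≤ w s(u, v))
    {a b : V} (p : H.Walk a b) : |θ a - θ b| ≤ (p.edges.map w).sum := by
  induction p with
  | nil => simp
  | cons h p ih =>
    simp only [SimpleGraph.Walk.edges_cons, List.map_cons, List.sum_cons]
    calc |θ _ - θ _| ≤ |θ _ - θ _| + |θ _ - θ _| := abs_sub_le _ _ _
      _ ≤ _ := add_le_add (hbound _ _ h) ih

/-- Let `H ≤ G` be a subgraph (the active lines) and suppose
`|θ u - θ v| ≤ w {u, v}` for every pair of vertices adjacent in `H`.  If `a`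
and `b` are joined by a walk in `H`, then there is a simple path `q` from `a`
to `b` in `G` with `|θ a - θ b|` at most the weight of `q` under `w`; hence
big-M values computed from the longest simple path in `G` are valid. -/
theorem angle_difference_le_some_path_weight {V : Type*} (G H : SimpleGraph V)
    (hHG : H ≤ G) (θ : V → ℝ) (w : Sym2 V → ℝ)
    (hbound : ∀ u v : V, H.Adj u v → |θ u - θ v| ≤ w s(u, v))
    (a b : V) (hreach : H.Reachable a b) :
    ∃ q : G.Walk a b, q.IsPath ∧ |θ a - θ b| ≤ (q.edges.map w).sum := by
  classical
  obtain ⟨p⟩ := hreach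
  refine ⟨(p.toPath : H.Walk a b).transfer G ?_, ?_, ?_⟩
  · intro e he
    exact SimpleGraph.edgeSet_mono hHG ((p.toPath : H.Walk a b).edges_subset_edgeSet he)
  · exact (p.toPath.2).transfer _
  · rw [SimpleGraph.Walk.edges_transfer]
    exact walk_weight_bound θ w hbound _
end

section
/- Let V be a finite type, let r ∈ V be a root vertex, let A ⊆ V × V be a set of arcs, and let u : V → ℤ be a vertex labeling. Assume that (i) every vertex v ∈ V has at least one outgoing arc (v, m) ∈ A, and (ii) every arc (n, m) ∈ A with n ≠ r and m ≠ r satisfies u(n) < u(m). Then for every vertex v ∈ V there is a directed path of arcs of A from v to r; in particular, in the underlying undirected graph of A every vertex is connected to r. This establishes that the Miller–Tucker–Zemlin connectivity constraints of the transmission switching formulation force the selected network topology to be connected. -/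
/-- Let `V` be finite with root `r`, `A ⊆ V × V` a set of arcs,
and `u : V → ℤ` a labeling such that (i) every vertex has at least one
outgoing arc in `A`, and (ii) every arc `(n, m) ∈ A` with `n ≠ r` and `m ≠ r`
satisfies `u n < u m`.  Then from every vertex there is a directed path of
arcs of `A` to `r`: the MTZ constraints force connectivity to the root. -/
theorem mtz_constraints_force_connectivity {V : Type*} [Finite V] (r : V)
    (A : Set (V × V)) (u : V → ℤ)
    (hout : ∀ v : V, ∃ m : V, (v, m) ∈ A)
    (hmtz : ∀ n m : V, (n, m) ∈ A → n ≠ r → m ≠ r → u n < u m) :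
    ∀ v : V, ∃ (k : ℕ) (x : ℕ → V), x 0 = v ∧ x k = r ∧
      ∀ i < k, (x i, x (i + 1)) ∈ A := by
  classical
  have := Fintype.ofFinite V
  have key : ∀ (n : ℕ) (v : V), {w | u v < u w}.toFinset.card ≤ n →
      ∃ (k : ℕ) (x : ℕ → V), x 0 = v ∧ x k = r ∧
        ∀ i < k, (x i, x (i + 1)) ∈ A := by
    intro n
    induction n with
    | zero =>
      intro v hcard
      by_cases hv : v = r
      · exact ⟨0, fun _ => v, rfl, hv, by omega⟩
      obtain ⟨m, hm⟩ := hout v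
      by_cases hmr : m = r
      · exact ⟨1, fun i => if i = 0 then v else r, by simp, by simp, by
          intro i hi
          interval_cases i
          simpa [hmr ▸ hm] using hm⟩
      · exfalso
        have hlt := hmtz v m hm hv hmr
        have : m ∈ {w | u v < u w}.toFinset := by simpa using hlt
        have := Finset.card_pos.mpr ⟨m, this⟩
        omega
    | succ n ih =>
      intro v hcard
      by_cases hv : v = r
      · exact ⟨0, fun _ => v, rfl, hv, by omega⟩
      obtain ⟨m, hm⟩ := hout v
      by_cases hmr : m = r
      · exact ⟨1, fun i => if i = 0 then v else r, by simp, by simp, by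
          intro i hi
          interval_cases i
          simpa using hmr ▸ hm⟩
      · have hlt := hmtz v m hm hv hmr
        have hsub : {w | u m < u w}.toFinset ⊂ {w | u v < u w}.toFinset := by
          constructor
          · intro w hw
            simp only [Set.mem_toFinset, Set.mem_setOf_eq] at *
            omega
          · intro hcon
            have : m ∈ {w | u v < u w}.toFinset := by simpa using hlt
            have := hcon this
            simp at this
        have hcard' : {w | u m < u w}.toFinset.card ≤ n := by
          have := Finset.card_lt_card hsub
          omega
        obtain ⟨k, x, hx0, hxk, hxa⟩ := ih m hcard'
        refine ⟨k + 1, fun i => if i = 0 then v else x (i - 1), by simp, by simp [hxk], ?_⟩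
        intro i hi
        rcases Nat.eq_zero_or_pos i with h0 | h0
        · subst h0
          simpa [hx0] using hm
        · have h1 : i ≠ 0 := by omega
          simp only [h1, if_neg, Nat.add_eq_zero, and_false, if_false]
          have : i - 1 < k := by omega
          have := hxa (i - 1) this
          simpa [Nat.sub_add_cancel h0] using this
  intro v
  exact key _ v le_rfl
end

section
/- Consider the weighted simple graph on five vertices n1, n2, n3, n4, n5 with edges and weights: {n4,n5} of weight 10, {n5,n2} of weight 50, {n3,n2} of weight 30, {n3,n1} of weight 32, {n4,n1} of weight 50, and {n1,n2} of weight 20. Then the maximum weight of a simple path from n4 to n5 in this graph equals 162: the path n4–n1–n3–n2–n5 has weight 50 + 32 + 30 + 50 = 162, and every simple path from n4 to n5 has weight at most 162. In particular 162 > 142, the value 142 being what the greedy bus-ordering method produces for the ordering n1, n2, n3, n4, n5, so that method does not yield valid upper bounds on the longest path. -/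
/-- Vertices: `n1 = 0`, `n2 = 1`, `n3 = 2`, `n4 = 3`, `n5 = 4` in `Fin 5`.
The counterexample graph of the paper, with edges
{n4,n5}, {n5,n2}, {n3,n2}, {n3,n1}, {n4,n1}, {n1,n2}. -/
def counterexampleGraph : SimpleGraph (Fin 5) :=
  SimpleGraph.fromEdgeSet
    {s((3 : Fin 5), 4), s((4 : Fin 5), 1), s((2 : Fin 5), 1),
     s((2 : Fin 5), 0), s((3 : Fin 5), 0), s((0 : Fin 5), 1)}

/-- The edge weights of the counterexample graph:
{n4,n5} ↦ 10, {n5,n2} ↦ 50, {n3,n2} ↦ 30, {n3,n1} ↦ 32, {n4,n1} ↦ 50,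
{n1,n2} ↦ 20 (and 0 on non-edges). -/
def counterexampleWeight : Sym2 (Fin 5) → ℝ := fun e =>
  if e = s((3 : Fin 5), 4) then 10
  else if e = s((4 : Fin 5), 1) then 50
  else if e = s((2 : Fin 5), 1) then 30
  else if e = s((2 : Fin 5), 0) then 32
  else if e = s((3 : Fin 5), 0) then 50
  else if e = s((0 : Fin 5), 1) then 20
  else 0


def ceEdgeFinset : Finset (Sym2 (Fin 5)) :=
  {s((3 : Fin 5), 4), s((4 : Fin 5), 1), s((2 : Fin 5), 1),
   s((2 : Fin 5), 0), s((3 : Fin 5), 0), s((0 : Fin 5), 1)}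

lemma ce_w_nonneg (e : Sym2 (Fin 5)) : 0 ≤ counterexampleWeight e := by
  unfold counterexampleWeight; split_ifs <;> norm_num

lemma ce_w_ge_ten {e : Sym2 (Fin 5)} (he : e ∈ ceEdgeFinset) :
    10 ≤ counterexampleWeight e := by
  fin_cases he <;> simp [counterexampleWeight] <;> norm_num

lemma ce_w_ge_twenty {e : Sym2 (Fin 5)} (he : e ∈ ceEdgeFinset)
    (hne : e ≠ s((3 : Fin 5), 4)) : 20 ≤ counterexampleWeight e := by
  fin_cases he <;> simp_all [counterexampleWeight] <;> norm_num

lemma ce_sum_S : ceEdgeFinset.sum counterexampleWeight = 192 := by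
  simp [ceEdgeFinset, counterexampleWeight, Finset.sum_insert, Sym2.eq_iff]
  norm_num

lemma ce_card_S : ceEdgeFinset.card = 6 := by decide

lemma ce_key (T : Finset (Sym2 (Fin 5))) (hT : T ⊆ ceEdgeFinset)
    (hcard : T.card ≤ 4) : T.sum counterexampleWeight ≤ 162 := by
  have h2 : 1 < (ceEdgeFinset \ T).card := by
    have h1 := Finset.card_sdiff_of_subset hT
    have h2 := ce_card_S
    omega
  obtain ⟨e1, he1, e2, he2, hne⟩ := Finset.one_lt_card.mp h2
  have hpair : 30 ≤ counterexampleWeight e1 + counterexampleWeight e2 := by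
    have he1S : e1 ∈ ceEdgeFinset := (Finset.mem_sdiff.mp he1).1
    have he2S : e2 ∈ ceEdgeFinset := (Finset.mem_sdiff.mp he2).1
    by_cases h : e1 = s((3 : Fin 5), 4)
    · have := ce_w_ge_ten he1S
      have := ce_w_ge_twenty he2S (by rw [← h]; exact (Ne.symm hne))
      linarith
    · have := ce_w_ge_twenty he1S h
      have := ce_w_ge_ten he2S
      linarith
  have hsub : ({e1, e2} : Finset (Sym2 (Fin 5))) ⊆ ceEdgeFinset \ T := by
    intro x hx
    rcases Finset.mem_insert.mp hx with h | h
    · exact h ▸ he1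
    · exact (Finset.mem_singleton.mp h) ▸ he2
  have h30 : 30 ≤ (ceEdgeFinset \ T).sum counterexampleWeight := by
    calc (30 : ℝ) ≤ ({e1, e2} : Finset (Sym2 (Fin 5))).sum counterexampleWeight := by
          rw [Finset.sum_pair hne]; exact hpair
      _ ≤ _ := Finset.sum_le_sum_of_subset_of_nonneg hsub (fun e _ _ => ce_w_nonneg e)
  have hsd := Finset.sum_sdiff_eq_sub (f := counterexampleWeight) hT
  rw [ce_sum_S] at hsd
  linarith

lemma ce_adj30 : counterexampleGraph.Adj 3 0 := by simp [counterexampleGraph, Sym2.eq_iff]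
lemma ce_adj02 : counterexampleGraph.Adj 0 2 := by simp [counterexampleGraph, Sym2.eq_iff]
lemma ce_adj21 : counterexampleGraph.Adj 2 1 := by simp [counterexampleGraph, Sym2.eq_iff]
lemma ce_adj14 : counterexampleGraph.Adj 1 4 := by simp [counterexampleGraph, Sym2.eq_iff]

def ceMyPath : counterexampleGraph.Walk 3 4 :=
  .cons ce_adj30 (.cons ce_adj02 (.cons ce_adj21 (.cons ce_adj14 .nil)))

/-- In the counterexample graph, the maximum weight of a simple
path from `n4` to `n5` equals `162`: some simple path from `n4` to `n5` has
weight `162` and every simple path from `n4` to `n5` has weight at most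
`162`.  In particular `162 > 142`, the value produced by the greedy
bus-ordering method for the ordering `n1, n2, n3, n4, n5`, so that method
does not yield valid upper bounds on the longest path. -/
theorem counterexample_longest_path_value :
    (∃ p : counterexampleGraph.Walk 3 4, p.IsPath ∧
        (p.edges.map counterexampleWeight).sum = 162) ∧
    (∀ p : counterexampleGraph.Walk 3 4, p.IsPath →
        (p.edges.map counterexampleWeight).sum ≤ 162) ∧
    (162 : ℝ) > 142 := by
  refine ⟨⟨ceMyPath, ?_, ?_⟩, ?_, by norm_num⟩
  · rw [SimpleGraph.Walk.isPath_def]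
    simp [ceMyPath]
  · simp [ceMyPath, counterexampleWeight]
    norm_num
  · intro p hp
    have hnd : p.edges.Nodup := hp.edges_nodup
    rw [← List.sum_toFinset _ hnd]
    apply ce_key
    · intro e he
      have := p.edges_subset_edgeSet (List.mem_toFinset.mp he)
      rw [counterexampleGraph, SimpleGraph.edgeSet_fromEdgeSet] at this
      have h := this.1
      simpa [ceEdgeFinset] using h
    · have hlen : p.length < 5 := by
        simpa using hp.length_lt
      have : p.edges.toFinset.card = p.edges.length := List.toFinset_card_of_nodup hnd
      rw [this, p.length_edges]
      omega
end
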